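/- arXiv:1612.07670 — 2 statements merged into one kernel-verified Lean document; each statement's English description precedes it below -/
import Mathlib

section
/- Let Z ~ N(μ_j, σ_j²) and Z' ~ N(μ_{j'}, σ_{j'}²) be independent of each other and of Z̄_l, the sample mean of n_l iid N(μ_l, σ_l²) variables. Then Cov((Z − Z̄_l)², (Z' − Z̄_l)²) = 2(σ_l²/n_l)(σ_l²/n_l + 2(μ_j − μ_l)(μ_{j'} − μ_l)). -/
/-!
Let `T = Z̄_l - μ_l`, a centred Gaussian of variance `s = v_l / n_l`, independent of `(Z, Z')`.
Conditionally on `Z̄_l = z` the squares `(Z - z)²` and `(Z' - z)²` are independent with means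
`v_j + (μ_j - z)²` and `v_j' + (μ_j' - z)²`, so the covariance is that of `(a - T)²` and `(b - T)²`
with `a = μ_j - μ_l`, `b = μ_j' - μ_l`. Expanding, this is `Var(T²) + 4ab Var(T) = 2s² + 4abs`,
using `E T³ = 0` and `E T⁴ = 3s²`, read off the derivatives at `0` of the mgf `exp (s t² / 2)`.
-/

open MeasureTheory ProbabilityTheory Real

/-- The covariance of two real random variables. -/
noncomputable def cov {Ω : Type*} [MeasurableSpace Ω] (P : Measure Ω) (X Y : Ω → ℝ) : ℝ :=
  ∫ ω, (X ω - ∫ ω', X ω' ∂P) * (Y ω - ∫ ω', Y ω' ∂P) ∂P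

open NNReal

lemma MeasureTheory.MemLp.sq {α : Type*} {_ : MeasurableSpace α} {μ : Measure α} {f : α → ℝ}
    (hf : MemLp f 4 μ) : MemLp (fun x => f x ^ 2) 2 μ := by
  refine (memLp_two_iff_integrable_sq (hf.aestronglyMeasurable.pow 2)).2 ?_
  have := hf.integrable_norm_pow (p := 4) (by norm_num)
  simpa [← pow_mul, Even.pow_abs ⟨2, rfl⟩] using this

lemma hasDerivAt_mul_rexp_mul_sq_div_two (v : ℝ) {q : ℝ → ℝ} {q' t : ℝ} (hq : HasDerivAt q q' t) :
    HasDerivAt (fun t => q t * rexp (v * t ^ 2 / 2))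
      ((q' + v * t * q t) * rexp (v * t ^ 2 / 2)) t :=
  have h : HasDerivAt (fun t => v * t ^ 2 / 2) (v * t) t :=
    (((hasDerivAt_pow 2 t).const_mul v).div_const 2).congr_deriv (by ring)
  (hq.mul h.exp).congr_deriv (by ring)

lemma iteratedDeriv_rexp_mul_sq_div_two_zero (v : ℝ) :
    iteratedDeriv 1 (fun t => rexp (v * t ^ 2 / 2)) 0 = 0 ∧
    iteratedDeriv 2 (fun t => rexp (v * t ^ 2 / 2)) 0 = v ∧
    iteratedDeriv 3 (fun t => rexp (v * t ^ 2 / 2)) 0 = 0 ∧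
    iteratedDeriv 4 (fun t => rexp (v * t ^ 2 / 2)) 0 = 3 * v ^ 2 := by
  have d1 : deriv (fun t => rexp (v * t ^ 2 / 2)) = fun t => v * t * rexp (v * t ^ 2 / 2) := by
    funext t
    simpa using (hasDerivAt_mul_rexp_mul_sq_div_two v (hasDerivAt_const t (1 : ℝ))).deriv
  have d2 : deriv (fun t => v * t * rexp (v * t ^ 2 / 2))
      = fun t => (v + v ^ 2 * t ^ 2) * rexp (v * t ^ 2 / 2) := by
    funext t
    rw [(hasDerivAt_mul_rexp_mul_sq_div_two v ((hasDerivAt_id' t).const_mul v)).deriv]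
    ring
  have d3 : deriv (fun t => (v + v ^ 2 * t ^ 2) * rexp (v * t ^ 2 / 2))
      = fun t => (3 * v ^ 2 * t + v ^ 3 * t ^ 3) * rexp (v * t ^ 2 / 2) := by
    funext t
    rw [(hasDerivAt_mul_rexp_mul_sq_div_two v
      (((hasDerivAt_pow 2 t).const_mul (v ^ 2)).const_add v)).deriv]
    ring
  have d4 : deriv (fun t => (3 * v ^ 2 * t + v ^ 3 * t ^ 3) * rexp (v * t ^ 2 / 2)) 0
      = 3 * v ^ 2 := by
    rw [(hasDerivAt_mul_rexp_mul_sq_div_two v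
      (((hasDerivAt_id' 0).const_mul (3 * v ^ 2)).fun_add
        ((hasDerivAt_pow 3 0).const_mul (v ^ 3)))).deriv]
    simp
  simp [iteratedDeriv_succ, d1, d2, d3, d4]

section GaussianMoments

variable {v : ℝ≥0}

lemma integral_pow_gaussianReal_zero (n : ℕ) :
    ∫ x, x ^ n ∂gaussianReal 0 v = iteratedDeriv n (fun t => rexp (v * t ^ 2 / 2)) 0 := by
  have h : (0 : ℝ) ∈ interior (integrableExpSet id (gaussianReal 0 v)) := by
    simp [integrableExpSet_id_gaussianReal]
  simpa [mgf_id_gaussianReal] using (iteratedDeriv_mgf_zero h n).symm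

lemma integral_quartic_gaussianReal_zero (c₀ c₁ c₂ c₃ c₄ : ℝ) :
    ∫ x, c₀ + c₁ * x + c₂ * x ^ 2 + c₃ * x ^ 3 + c₄ * x ^ 4 ∂gaussianReal 0 v
      = c₀ + c₂ * v + c₄ * (3 * v ^ 2) := by
  have hint (k : ℕ) : Integrable (fun x => x ^ k) (gaussianReal 0 v) :=
    integrable_pow_of_mem_interior_integrableExpSet (by simp) k
  have hsum (x : ℝ) : c₀ + c₁ * x + c₂ * x ^ 2 + c₃ * x ^ 3 + c₄ * x ^ 4
      = ∑ k : Fin 5, ![c₀, c₁, c₂, c₃, c₄] k * x ^ (k : ℕ) := by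
    simp [Fin.sum_univ_five]
  obtain ⟨m₁, m₂, m₃, m₄⟩ := iteratedDeriv_rexp_mul_sq_div_two_zero v
  simp_rw [hsum]
  rw [integral_finsetSum (f := fun k x => ![c₀, c₁, c₂, c₃, c₄] k * x ^ (k : ℕ)) _
    fun k _ => (hint k).const_mul _]
  simp [integral_const_mul, Fin.sum_univ_five, integral_pow_gaussianReal_zero, m₁, m₂, m₃, m₄]

lemma integral_sub_sq_gaussianReal (μ c : ℝ) :
    ∫ x, (x - c) ^ 2 ∂gaussianReal μ v = v + (μ - c) ^ 2 := by
  rw [← zero_add μ, ← gaussianReal_map_add_const, integral_map (by fun_prop) (by fun_prop)]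
  calc _ = ∫ x, (μ - c) ^ 2 + 2 * (μ - c) * x + 1 * x ^ 2 + 0 * x ^ 3 + 0 * x ^ 4
        ∂gaussianReal 0 v := by
        congr with x; ring
    _ = _ := by rw [integral_quartic_gaussianReal_zero]; ring

lemma memLp_sq_const_sub_gaussianReal (μ c : ℝ) :
    MemLp (fun x => (c - x) ^ 2) 2 (gaussianReal μ v) :=
  ((memLp_const c).sub (memLp_id_gaussianReal 4)).sq

lemma covariance_sub_sq_sub_sq_gaussianReal_zero (a b : ℝ) :
    cov[fun x => (a - x) ^ 2, fun x => (b - x) ^ 2; gaussianReal 0 v]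
      = 2 * v * (v + 2 * a * b) := by
  rw [covariance_eq_sub (memLp_sq_const_sub_gaussianReal 0 a) (memLp_sq_const_sub_gaussianReal 0 b)]
  have hsq (c : ℝ) : ∫ x, (c - x) ^ 2 ∂gaussianReal 0 v = c ^ 2 + v := by
    simp_rw [sub_sq_comm c, integral_sub_sq_gaussianReal]
    ring
  have hprod : ∫ x, (a - x) ^ 2 * (b - x) ^ 2 ∂gaussianReal 0 v
      = a ^ 2 * b ^ 2 + (a ^ 2 + 4 * a * b + b ^ 2) * v + 3 * v ^ 2 := by
    calc _ = ∫ x, a ^ 2 * b ^ 2 + -2 * a * b * (a + b) * x + (a ^ 2 + 4 * a * b + b ^ 2) * x ^ 2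
          + -2 * (a + b) * x ^ 3 + 1 * x ^ 4 ∂gaussianReal 0 v := by
          congr with x; ring
      _ = _ := by rw [integral_quartic_gaussianReal_zero]; ring
  simp only [Pi.mul_apply]
  rw [hprod, hsq, hsq]
  ring

lemma covariance_sub_sq_sub_sq_gaussianReal (a b μ : ℝ) :
    cov[fun x => (a - x) ^ 2, fun x => (b - x) ^ 2; gaussianReal μ v]
      = 2 * v * (v + 2 * (a - μ) * (b - μ)) := by
  rw [← zero_add μ, ← gaussianReal_map_add_const, covariance_map (by fun_prop) (by fun_prop)
    (by fun_prop), zero_add, ← covariance_sub_sq_sub_sq_gaussianReal_zero]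
  congr 1 <;> ext x <;> simp only [Function.comp_apply] <;> ring

end GaussianMoments

section CommonCoordinate

variable {α β γ : Type*} [MeasurableSpace α] [MeasurableSpace β] [MeasurableSpace γ]
  {μ : Measure α} {ν : Measure β} {ρ : Measure γ} {f : α → γ → ℝ} {g : β → γ → ℝ}

lemma integral_prod_prod_mul [SFinite μ] [SFinite ν] [SFinite ρ]
    (h : Integrable (fun p : (α × β) × γ => f p.1.1 p.2 * g p.1.2 p.2) ((μ.prod ν).prod ρ)) :
    ∫ p, f p.1.1 p.2 * g p.1.2 p.2 ∂(μ.prod ν).prod ρ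
      = ∫ z, (∫ x, f x z ∂μ) * ∫ y, g y z ∂ν ∂ρ := by
  rw [integral_prod_symm _ h]
  congr with z
  exact integral_prod_mul (fun x => f x z) (fun y => g y z)

lemma covariance_prod_prod [IsProbabilityMeasure μ] [IsProbabilityMeasure ν]
    [IsProbabilityMeasure ρ]
    (hf : MemLp (fun p : (α × β) × γ => f p.1.1 p.2) 2 ((μ.prod ν).prod ρ))
    (hg : MemLp (fun p : (α × β) × γ => g p.1.2 p.2) 2 ((μ.prod ν).prod ρ))
    (hf' : MemLp (fun z => ∫ x, f x z ∂μ) 2 ρ) (hg' : MemLp (fun z => ∫ y, g y z ∂ν) 2 ρ) :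
    cov[fun p => f p.1.1 p.2, fun p => g p.1.2 p.2; (μ.prod ν).prod ρ]
      = cov[fun z => ∫ x, f x z ∂μ, fun z => ∫ y, g y z ∂ν; ρ] := by
  have hF : ∫ p, f p.1.1 p.2 ∂(μ.prod ν).prod ρ = ∫ z, ∫ x, f x z ∂μ ∂ρ := by
    simpa using integral_prod_prod_mul (g := fun _ _ => (1 : ℝ))
      (by simpa using hf.integrable one_le_two) |>.trans (by simp [probReal_univ])
  have hG : ∫ p, g p.1.2 p.2 ∂(μ.prod ν).prod ρ = ∫ z, ∫ y, g y z ∂ν ∂ρ := by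
    simpa using integral_prod_prod_mul (f := fun _ _ => (1 : ℝ))
      (by simpa using hg.integrable one_le_two) |>.trans (by simp [probReal_univ])
  rw [covariance_eq_sub hf hg, covariance_eq_sub hf' hg']
  simp only [Pi.mul_apply]
  rw [integral_prod_prod_mul (hf.integrable_mul hg), hF, hG]

end CommonCoordinate

lemma covariance_sq_sub_sq_sub_gaussianReal (μ₁ μ₂ μ₃ : ℝ) (v₁ v₂ v₃ : ℝ≥0) :
    cov[fun p : (ℝ × ℝ) × ℝ => (p.1.1 - p.2) ^ 2, fun p => (p.1.2 - p.2) ^ 2;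
      ((gaussianReal μ₁ v₁).prod (gaussianReal μ₂ v₂)).prod (gaussianReal μ₃ v₃)]
      = 2 * v₃ * (v₃ + 2 * (μ₁ - μ₃) * (μ₂ - μ₃)) := by
  set ρ := gaussianReal μ₃ v₃
  set P := ((gaussianReal μ₁ v₁).prod (gaussianReal μ₂ v₂)).prod ρ
  have hL4 (μ : ℝ) (v : ℝ≥0) : MemLp (fun x => x) 4 (gaussianReal μ v) := memLp_id_gaussianReal 4
  have h₁ : MemLp (fun p : (ℝ × ℝ) × ℝ => (p.1.1 - p.2) ^ 2) 2 P :=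
    ((((hL4 μ₁ v₁).comp_fst _).comp_fst _).sub ((hL4 μ₃ v₃).comp_snd _)).sq
  have h₂ : MemLp (fun p : (ℝ × ℝ) × ℝ => (p.1.2 - p.2) ^ 2) 2 P :=
    ((((hL4 μ₂ v₂).comp_snd _).comp_fst _).sub ((hL4 μ₃ v₃).comp_snd _)).sq
  have h' (μ : ℝ) (v : ℝ≥0) : MemLp (fun z => ∫ x, (x - z) ^ 2 ∂gaussianReal μ v) 2 ρ := by
    simp only [integral_sub_sq_gaussianReal]
    exact (memLp_const (v : ℝ)).add (memLp_sq_const_sub_gaussianReal (v := v₃) μ₃ μ)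
  rw [covariance_prod_prod (f := fun x z => (x - z) ^ 2) (g := fun y z => (y - z) ^ 2)
    h₁ h₂ (h' μ₁ v₁) (h' μ₂ v₂)]
  simp only [integral_sub_sq_gaussianReal]
  rw [covariance_const_add_left ((memLp_sq_const_sub_gaussianReal μ₃ μ₁).integrable one_le_two),
    covariance_const_add_right ((memLp_sq_const_sub_gaussianReal μ₃ μ₂).integrable one_le_two),
    covariance_sub_sq_sub_sq_gaussianReal]

namespace ProbabilityTheory

variable {Ω : Type*} [MeasurableSpace Ω] {P : Measure Ω}

lemma iIndepFun.map_sum_eq_gaussianReal {ι : Type*} {X : ι → Ω → ℝ} (hX : iIndepFun X P)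
    {μ : ι → ℝ} {v : ι → ℝ≥0} (hlaw : ∀ i, P.map (X i) = gaussianReal (μ i) (v i))
    (s : Finset ι) :
    P.map (∑ i ∈ s, X i) = gaussianReal (∑ i ∈ s, μ i) (∑ i ∈ s, v i) := by
  have := hX.isProbabilityMeasure
  have hmeas (i : ι) : AEMeasurable (X i) P := .of_map_ne_zero (by simp [hlaw, NeZero.ne])
  classical
  induction s using Finset.induction_on with
  | empty =>
    change P.map (fun _ => 0) = _
    simp [gaussianReal_zero_var]
  | insert i s hi ih =>
    rw [Finset.sum_insert hi, Finset.sum_insert hi, Finset.sum_insert hi]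
    exact gaussianReal_add_gaussianReal_of_indepFun
      (hX.indepFun_finsetSum_of_notMem₀ hmeas hi).symm (hlaw i) ih

lemma iIndepFun.map_sum_div_eq_gaussianReal {m : ℕ} (hm : 0 < m) {W : Fin m → Ω → ℝ}
    (hW : iIndepFun W P) {μ : ℝ} {v : ℝ≥0} (hlaw : ∀ i, P.map (W i) = gaussianReal μ v) :
    P.map (fun ω => (∑ i, W i ω) / m) = gaussianReal μ (v / m) := by
  have hWm (i : Fin m) : AEMeasurable (W i) P := .of_map_ne_zero (by simp [hlaw, NeZero.ne])
  have hmR : (m : ℝ) ≠ 0 := by positivity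
  rw [show (fun ω => (∑ i, W i ω) / m) = (· / (m : ℝ)) ∘ ∑ i, W i by
      ext; simp [Finset.sum_apply],
    ← AEMeasurable.map_map_of_aemeasurable (by fun_prop) (by fun_prop),
    hW.map_sum_eq_gaussianReal hlaw, gaussianReal_map_div_const, gaussianReal_ext_iff]
  simp only [Finset.sum_const, Finset.card_univ, Fintype.card_fin, nsmul_eq_mul]
  constructor
  · field_simp
  · ext
    simp only [NNReal.coe_div, NNReal.coe_mul, NNReal.coe_natCast, coe_mk]
    field_simp

lemma iIndepFun.indepFun_sumElim {ι κ β : Type*} [MeasurableSpace β] [Fintype ι] [Fintype κ]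
    {X : ι → Ω → β} {Y : κ → Ω → β} (h : iIndepFun (Sum.elim X Y) P)
    (hmeas : ∀ i, AEMeasurable (Sum.elim X Y i) P) :
    IndepFun (fun ω i => X i ω) (fun ω j => Y j ω) P := by
  have hST := h.indepFun_finset₀ (Finset.univ.map .inl) (Finset.univ.map .inr)
    (by simp [Finset.disjoint_left]) hmeas
  exact hST.comp (measurable_pi_lambda (fun x i => x ⟨.inl i, by simp⟩)
    fun _ => measurable_pi_apply _) (measurable_pi_lambda (fun y j => y ⟨.inr j, by simp⟩)
    fun _ => measurable_pi_apply _)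

end ProbabilityTheory

/-- `Z ~ N(μⱼ, vⱼ)` and `Z' ~ N(μⱼ', vⱼ')` independent of each other and of the sample mean
`Z̄_l` of `m = n_l` iid `N(μ_l, v_l)` variables:
`Cov((Z − Z̄_l)², (Z' − Z̄_l)²) = 2(v_l/m)(v_l/m + 2(μⱼ − μ_l)(μⱼ' − μ_l))`. -/
theorem stmt_11 {Ω : Type*} [MeasurableSpace Ω] (P : Measure Ω) [IsProbabilityMeasure P]
    (m : ℕ) (hm : 0 < m) (Z Z' : Ω → ℝ) (W : Fin m → Ω → ℝ)
    (μj μj' μl : ℝ) (vj vj' vl : NNReal)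
    (hZ : Measure.map Z P = gaussianReal μj vj)
    (hZ' : Measure.map Z' P = gaussianReal μj' vj')
    (hW : ∀ i, Measure.map (W i) P = gaussianReal μl vl)
    (hind : iIndepFun
      (fun i : Fin 2 ⊕ Fin m => Sum.elim ![Z, Z'] W i) P) :
    cov P (fun ω => (Z ω - (∑ i, W i ω) / m) ^ 2)
        (fun ω => (Z' ω - (∑ i, W i ω) / m) ^ 2)
      = 2 * ((vl : ℝ) / m) * ((vl : ℝ) / m + 2 * (μj - μl) * (μj' - μl)) := by
  have hZm : AEMeasurable Z P := .of_map_ne_zero (by simp [hZ, NeZero.ne])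
  have hZ'm : AEMeasurable Z' P := .of_map_ne_zero (by simp [hZ', NeZero.ne])
  have hWm (i : Fin m) : AEMeasurable (W i) P := .of_map_ne_zero (by simp [hW, NeZero.ne])
  have hmeas : ∀ i, AEMeasurable (Sum.elim ![Z, Z'] W i) P :=
    Sum.rec (Fin.cases hZm (Fin.cases hZ'm finZeroElim)) hWm
  set Wbar := fun ω => (∑ i, W i ω) / m
  have hWbar : P.map Wbar = gaussianReal μl (vl / m) :=
    (hind.precomp Sum.inr_injective).map_sum_div_eq_gaussianReal hm hW
  have hindep : IndepFun (fun ω => (Z ω, Z' ω)) Wbar P :=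
    (hind.indepFun_sumElim hmeas).comp (φ := fun x => (x 0, x 1))
      (ψ := fun w : Fin m → ℝ => (∑ i, w i) / m) (by fun_prop) (by fun_prop)
  have hlaw : P.map (fun ω => ((Z ω, Z' ω), Wbar ω))
      = ((gaussianReal μj vj).prod (gaussianReal μj' vj')).prod (gaussianReal μl (vl / m)) := by
    have hZZ' : IndepFun Z Z' P := hind.indepFun (i := .inl 0) (j := .inl 1) (by simp)
    rw [hindep.map_prod_eq_prod_map_map (by fun_prop) (by fun_prop),
      hZZ'.map_prod_eq_prod_map_map hZm hZ'm, hZ, hZ', hWbar]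
  have := covariance_sq_sub_sq_sub_gaussianReal μj μj' μl vj vj' (vl / m)
  rw [← hlaw, covariance_map (by fun_prop) (by fun_prop) (by fun_prop)] at this
  exact this.trans (by push_cast; ring)
end

section
/- Under the multi-source setting with squared-integrable losses, the variance of μ̂_os equals ∑_{j=1}^k (od_j²/(n p_j))·( ∑_{l≠j} p_l²(V_{j;l} + n(p_j − 1/n)C_{j;l}) + ∑∑_{l≠l', l,l'≠j} p_l p_{l'} C_{j;l,l'} ) + ∑∑_{j≠j'} od_j od_{j'} ∑_{l≠j,j'} p_l( p_l C_{j,j';l} + 2 p_j C_{j,j';l,j} ), where od_j = p_j/(1−p_j), V_{j;l} = Var L(Z, d̂_l) for Z ~ F_j independent of source l, C_{j;l} = Cov(L(Z, d̂_l), L(Z', d̂_l)) for Z, Z' iid F_j independent of source l, C_{j;l,l'} = Cov(L(Z, d̂_l), L(Z, d̂_{l'})), C_{j,j';l} = Cov(L(Z, d̂_l), L(Z', d̂_l)) with Z ~ F_j, Z' ~ F_{j'}, and C_{j,j';l,j} = Cov(L(Z, d̂_l), L(Z', d̂_j)) with Z in source j, Z' ~ F_{j'}. -/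
/-!
Expanding the variance bilinearly writes `Var μ̂_os` as a weighted sum, over source pairs
`(j, j')` and rule pairs `(l, l')`, of block covariances
`∑_{i ∈ S_j, i' ∈ S_j'} Cov(L(Z_i, d̂_l), L(Z_i', d̂_l'))`, each of which the exchangeability
assumptions make explicit. Within one source only the pairs with `l = l'` (giving `V` and `C_{j;l}`)
or `i = i'` (giving `C_{j;l,l'}`) survive. Across two sources only `l = l'` (giving `C_{j,j';l}`)
and the pairs where one rule was trained on the other observation's source survive; the latter
arise once from `(j, j')` and once from `(j', j)`, whence the factor `2`. Finally the weight
`n_l / (n (n - n_j))` times the block size `n_j` is `od_j p_l`.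
-/

open MeasureTheory ProbabilityTheory Real

open Finset

namespace Finset

variable {α : Type*} [DecidableEq α]

theorem sum_sum_eq_sum_diag_add_sum_sum_erase {M : Type*} [AddCommMonoid M] (s : Finset α)
    (f : α → α → M) :
    ∑ x ∈ s, ∑ y ∈ s, f x y = ∑ x ∈ s, f x x + ∑ x ∈ s, ∑ y ∈ s.erase x, f x y := by
  rw [← sum_add_distrib]
  exact sum_congr rfl fun x hx => (add_sum_erase s _ hx).symm

theorem sum_sum_eq_of_diag_of_offDiag {R : Type*} [CommRing R] {s : Finset α} {f : α → α → R}
    {a b : R} (hdiag : ∀ x ∈ s, f x x = a) (hoff : ∀ x ∈ s, ∀ y ∈ s, x ≠ y → f x y = b) :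
    ∑ x ∈ s, ∑ y ∈ s, f x y = #s * a + #s * (#s - 1) * b := by
  have hrow : ∀ x ∈ s, ∑ y ∈ s.erase x, f x y = (#s - 1) * b := fun x hx => by
    rw [sum_congr rfl fun y hy => hoff x hx y (mem_of_mem_erase hy) (ne_of_mem_erase hy).symm,
      sum_const, nsmul_eq_mul, cast_card_erase_of_mem hx]
  rw [sum_sum_eq_sum_diag_add_sum_sum_erase, sum_congr rfl hdiag, sum_congr rfl hrow]
  simp only [sum_const, nsmul_eq_mul, mul_assoc]

theorem sum_erase_sum_erase_eq {M : Type*} [AddCommMonoid M] {s : Finset α} {a b : α}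
    (ha : a ∈ s) (hb : b ∈ s) (hab : a ≠ b) (f : α → α → M) :
    ∑ x ∈ s.erase a, ∑ y ∈ s.erase b, f x y
      = f b a + ∑ x ∈ (s.erase a).erase b, (f b x + f x a)
        + ∑ x ∈ (s.erase a).erase b, ∑ y ∈ (s.erase a).erase b, f x y := by
  have hb' : b ∈ s.erase a := mem_erase.mpr ⟨hab.symm, hb⟩
  have ha' : a ∈ s.erase b := mem_erase.mpr ⟨hab, ha⟩
  rw [← add_sum_erase _ _ hb', ← add_sum_erase _ _ ha',
    sum_congr rfl fun x _ => (add_sum_erase _ (f x) ha').symm, sum_add_distrib, sum_add_distrib,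
    erase_right_comm (a := b)]
  abel

theorem filter_ne_and_ne (s : Finset α) (a b : α) :
    s.filter (fun x => x ≠ a ∧ x ≠ b) = (s.erase a).erase b := by
  ext
  simp only [mem_filter, mem_erase]
  tauto

theorem sum_sum_erase_add_swap {M : Type*} [AddCommMonoid M] (s : Finset α) (f g : α → α → M) :
    ∑ x ∈ s, ∑ y ∈ s.erase x, (f x y + g y x) = ∑ x ∈ s, ∑ y ∈ s.erase x, (f x y + g x y) := by
  have hswap : ∑ x ∈ s, ∑ y ∈ s.erase x, g x y = ∑ x ∈ s, ∑ y ∈ s.erase x, g y x := by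
    simp only [← filter_ne', sum_filter]
    rw [sum_comm]
    exact sum_congr rfl fun x _ => sum_congr rfl fun y _ => if_congr ne_comm rfl rfl
  simp only [sum_add_distrib, hswap]

end Finset

section Covariance

variable {Ω ι κ ι' : Type*} [MeasurableSpace Ω] {P : Measure Ω}

theorem variance_sum_sum_sum_mul [IsFiniteMeasure P] (R : Finset ι) (T : ι → Finset κ)
    (S : ι → Finset ι') (c : ι → κ → ℝ) {X : ι' → κ → Ω → ℝ} (hX : ∀ i l, MemLp (X i l) 2 P) :
    Var[fun ω => ∑ j ∈ R, ∑ l ∈ T j, ∑ i ∈ S j, c j l * X i l ω; P]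
      = ∑ j ∈ R, ∑ j' ∈ R, ∑ l ∈ T j, ∑ l' ∈ T j', c j l * c j' l' *
          ∑ i ∈ S j, ∑ i' ∈ S j', cov[X i l, X i' l'; P] := by
  have hterm : ∀ j l i, MemLp (fun ω => c j l * X i l ω) 2 P := fun j l i => (hX i l).const_mul _
  have hblock : ∀ j l, MemLp (fun ω => ∑ i ∈ S j, c j l * X i l ω) 2 P := fun j l =>
    memLp_finsetSum _ fun i _ => hterm j l i
  have hsource : ∀ j, MemLp (fun ω => ∑ l ∈ T j, ∑ i ∈ S j, c j l * X i l ω) 2 P := fun j =>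
    memLp_finsetSum _ fun l _ => hblock j l
  rw [← covariance_self (memLp_finsetSum _ fun j _ => hsource j).aemeasurable,
    covariance_fun_sum_fun_sum' (fun j _ => hsource j) (fun j _ => hsource j)]
  refine sum_congr rfl fun j _ => sum_congr rfl fun j' _ => ?_
  rw [covariance_fun_sum_fun_sum' (fun l _ => hblock j l) (fun l _ => hblock j' l)]
  refine sum_congr rfl fun l _ => sum_congr rfl fun l' _ => ?_
  rw [covariance_fun_sum_fun_sum' (fun i _ => hterm j l i) (fun i _ => hterm j' l' i), mul_sum]
  refine sum_congr rfl fun i _ => ?_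
  rw [mul_sum]
  refine sum_congr rfl fun i' _ => ?_
  rw [covariance_const_mul_left, covariance_const_mul_right, mul_assoc]

variable [DecidableEq κ] [Fintype κ] {X : ι' → κ → Ω → ℝ}

theorem sum_sum_mul_covariance_within_source [DecidableEq ι'] {A : Finset ι'} {a : κ}
    {c q : κ → ℝ} {K : ℝ} (hw : ∀ l l', c l * c l' * #A = K * (q l * q l'))
    {V C₂ : κ → ℝ} {C₃ : κ → κ → ℝ} (hX : ∀ i l, AEMeasurable (X i l) P)
    (hV : ∀ l, l ≠ a → ∀ i ∈ A, Var[X i l; P] = V l)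
    (hC₂ : ∀ l, l ≠ a → ∀ i ∈ A, ∀ i' ∈ A, i ≠ i' → cov[X i l, X i' l; P] = C₂ l)
    (hC₃ : ∀ l l', l ≠ a → l' ≠ a → l ≠ l' → ∀ i ∈ A, cov[X i l, X i l'; P] = C₃ l l')
    (hzero : ∀ l l', l ≠ a → l' ≠ a → l ≠ l' → ∀ i ∈ A, ∀ i' ∈ A, i ≠ i' →
      cov[X i l, X i' l'; P] = 0) :
    ∑ l ∈ univ.erase a, ∑ l' ∈ univ.erase a,
        c l * c l' * ∑ i ∈ A, ∑ i' ∈ A, cov[X i l, X i' l'; P]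
      = K * (∑ l ∈ univ.erase a, q l ^ 2 * (V l + (#A - 1) * C₂ l)
        + ∑ l ∈ univ.erase a, ∑ l' ∈ (univ.erase a).erase l, q l * q l' * C₃ l l') := by
  rw [sum_sum_eq_sum_diag_add_sum_sum_erase, mul_add, mul_sum, mul_sum]
  congr 1
  · refine sum_congr rfl fun l hl => ?_
    have hla := ne_of_mem_erase hl
    rw [sum_sum_eq_of_diag_of_offDiag
      (fun i hi => (covariance_self (hX i l)).trans (hV l hla i hi)) (hC₂ l hla)]
    linear_combination (V l + (#A - 1) * C₂ l) * hw l l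
  · refine sum_congr rfl fun l hl => ?_
    rw [mul_sum]
    refine sum_congr rfl fun l' hl' => ?_
    have hla := ne_of_mem_erase hl
    have hl'a := ne_of_mem_erase (mem_of_mem_erase hl')
    have hll' := (ne_of_mem_erase hl').symm
    rw [sum_sum_eq_of_diag_of_offDiag (hC₃ l l' hla hl'a hll') (hzero l l' hla hl'a hll')]
    linear_combination C₃ l l' * hw l l'

theorem sum_sum_mul_covariance_across_sources {A B : Finset ι'} (hAB : Disjoint A B) {a b : κ}
    (hab : a ≠ b) {c d q : κ → ℝ} {K : ℝ} (hw : ∀ l l', c l * d l' * (#A * #B) = K * (q l * q l'))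
    {C₅ C₄ C₄' : κ → ℝ}
    (hC₅ : ∀ l, l ≠ a → l ≠ b → ∀ i ∈ A, ∀ i' ∈ B, cov[X i l, X i' l; P] = C₅ l)
    (hC₄ : ∀ l, l ≠ a → l ≠ b → ∀ i ∈ A, ∀ i' ∈ B, cov[X i l, X i' a; P] = C₄ l)
    (hC₄' : ∀ l, l ≠ b → l ≠ a → ∀ i ∈ B, ∀ i' ∈ A, cov[X i l, X i' b; P] = C₄' l)
    (hzero' : ∀ i ∈ A, ∀ i' ∈ B, cov[X i b, X i' a; P] = 0)
    (hzero : ∀ l l', l ≠ a → l' ≠ b → l ≠ l' → l' ≠ a → l ≠ b → ∀ i ∈ A, ∀ i' ∈ B, i ≠ i' →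
      cov[X i l, X i' l'; P] = 0) :
    ∑ l ∈ univ.erase a, ∑ l' ∈ univ.erase b,
        c l * d l' * ∑ i ∈ A, ∑ i' ∈ B, cov[X i l, X i' l'; P]
      = K * ∑ l ∈ (univ.erase a).erase b, (q l * q l * C₅ l + q l * q a * C₄ l)
        + K * ∑ l ∈ (univ.erase a).erase b, q b * q l * C₄' l := by
  have hconst : ∀ {l l' v}, (∀ i ∈ A, ∀ i' ∈ B, cov[X i l, X i' l'; P] = v) →
      ∑ i ∈ A, ∑ i' ∈ B, cov[X i l, X i' l'; P] = #A * #B * v := fun h => by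
    rw [sum_eq_card_nsmul fun i hi => sum_eq_card_nsmul (h i hi)]
    simp only [nsmul_eq_mul, mul_assoc]
  rw [sum_erase_sum_erase_eq (mem_univ a) (mem_univ b) hab, hconst hzero', mul_zero, mul_zero,
    zero_add, sum_sum_eq_sum_diag_add_sum_sum_erase, mul_sum, mul_sum, ← sum_add_distrib,
    ← sum_add_distrib, ← sum_add_distrib]
  refine sum_congr rfl fun l hl => ?_
  obtain ⟨hlb, hla⟩ : l ≠ b ∧ l ≠ a := by simpa using hl
  have hoff : ∑ l' ∈ ((univ.erase a).erase b).erase l,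
      c l * d l' * ∑ i ∈ A, ∑ i' ∈ B, cov[X i l, X i' l'; P] = 0 := sum_eq_zero fun l' hl' => by
    obtain ⟨hl'l, hl'b, hl'a⟩ : l' ≠ l ∧ l' ≠ b ∧ l' ≠ a := by simpa using hl'
    rw [hconst fun i hi i' hi' => hzero l l' hla hl'b hl'l.symm hl'a hlb i hi i' hi'
      (disjoint_left.mp hAB hi <| · ▸ hi'), mul_zero, mul_zero]
  rw [hoff, hconst fun i hi i' hi' => (covariance_comm _ _).trans (hC₄' l hlb hla i' hi' i hi),
    hconst (hC₄ l hla hlb), hconst (hC₅ l hla hlb)]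
  linear_combination C₅ l * hw l l + C₄ l * hw l a + C₄' l * hw b l

end Covariance

theorem weight_mul_weight_eq_odds_mul_odds {n s t : ℕ} (hs : s < n) (ht : t < n) (a b : ℝ) :
    1 / (n : ℝ) * (1 / (n - s)) * a * (1 / n * (1 / (n - t)) * b) * (s * t)
      = s / n / (1 - s / n) * (t / n / (1 - t / n)) * (a / n * (b / n)) := by
  have : (n : ℝ) ≠ 0 := Nat.cast_ne_zero.mpr (by omega)
  have : (n : ℝ) - s ≠ 0 := sub_ne_zero.mpr (by exact_mod_cast hs.ne')
  have : (n : ℝ) - t ≠ 0 := sub_ne_zero.mpr (by exact_mod_cast ht.ne')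
  field_simp

theorem weight_mul_weight_eq_odds_sq_div {n s : ℕ} (hs₀ : 0 < s) (hs : s < n) (a b : ℝ) :
    1 / (n : ℝ) * (1 / (n - s)) * a * (1 / n * (1 / (n - s)) * b) * s
      = (s / n / (1 - s / n)) ^ 2 / (n * (s / n)) * (a / n * (b / n)) := by
  have : (n : ℝ) ≠ 0 := Nat.cast_ne_zero.mpr (by omega)
  have : (n : ℝ) - s ≠ 0 := sub_ne_zero.mpr (by exact_mod_cast hs.ne')
  have : (s : ℝ) ≠ 0 := Nat.cast_ne_zero.mpr hs₀.ne'
  field_simp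

/-- The variance of the out-of-source error estimator `μ̂_os` in the multi-source setting,
expressed through `V_{j;l}`, `C_{j;l}`, `C_{j;l,l'}`, `C_{j,j';l}` and `C_{j,j';l,j}`,
which describe the second-moment structure of the losses `ℓ i l = L(Z_i, d̂_l)`
(this structure follows from the exchangeability/independence properties E.1–E.5). -/
theorem stmt_14 {Ω : Type*} [MeasurableSpace Ω] (P : Measure Ω) [IsProbabilityMeasure P]
    (n k : ℕ) (ns : Fin k → ℕ) (S : Fin k → Finset (Fin n)) (p od : Fin k → ℝ)
    (ℓ : Fin n → Fin k → Ω → ℝ)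
    (V C2 : Fin k → Fin k → ℝ) (C3 C5 C4 : Fin k → Fin k → Fin k → ℝ)
    (hpart : ∀ i : Fin n, ∃! j, i ∈ S j)
    (hcard : ∀ j, (S j).card = ns j)
    (hpos : ∀ j, 0 < ns j) (hlt : ∀ j, ns j < n)
    (hp : ∀ j, p j = (ns j : ℝ) / n)
    (hod : ∀ j, od j = p j / (1 - p j))
    (hmem : ∀ i l, MemLp (ℓ i l) 2 P)
    (hV : ∀ j l, l ≠ j → ∀ i ∈ S j, variance (ℓ i l) P = V j l)
    (hC2 : ∀ j l, l ≠ j → ∀ i ∈ S j, ∀ i' ∈ S j, i ≠ i' →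
      cov P (ℓ i l) (ℓ i' l) = C2 j l)
    (hC3 : ∀ j l l', l ≠ j → l' ≠ j → l ≠ l' → ∀ i ∈ S j,
      cov P (ℓ i l) (ℓ i l') = C3 j l l')
    (hC5 : ∀ j j' l, j ≠ j' → l ≠ j → l ≠ j' → ∀ i ∈ S j, ∀ i' ∈ S j',
      cov P (ℓ i l) (ℓ i' l) = C5 j j' l)
    (hC4 : ∀ j j' l, j ≠ j' → l ≠ j → l ≠ j' → ∀ i ∈ S j, ∀ i' ∈ S j',
      cov P (ℓ i l) (ℓ i' j) = C4 j j' l)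
    (hzero : ∀ j j' l l', l ≠ j → l' ≠ j' → l ≠ l' → l' ≠ j → l ≠ j' →
      ∀ i ∈ S j, ∀ i' ∈ S j', i ≠ i' → cov P (ℓ i l) (ℓ i' l') = 0)
    (hzero' : ∀ j j', j ≠ j' → ∀ i ∈ S j, ∀ i' ∈ S j',
      cov P (ℓ i j') (ℓ i' j) = 0) :
    variance (fun ω => (1 / (n : ℝ)) * ∑ j, (1 / ((n : ℝ) - ns j)) *
        ∑ l ∈ Finset.univ.filter (· ≠ j), (ns l : ℝ) * ∑ i ∈ S j, ℓ i l ω) P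
      = (∑ j, od j ^ 2 / (n * p j) *
          ((∑ l ∈ Finset.univ.filter (· ≠ j),
              p l ^ 2 * (V j l + n * (p j - 1 / n) * C2 j l))
            + ∑ l ∈ Finset.univ.filter (· ≠ j),
                ∑ l' ∈ Finset.univ.filter (fun l' => l' ≠ j ∧ l' ≠ l),
                  p l * p l' * C3 j l l'))
        + ∑ j, ∑ j' ∈ Finset.univ.filter (· ≠ j),
            od j * od j' * ∑ l ∈ Finset.univ.filter (fun l0 => l0 ≠ j ∧ l0 ≠ j'),
              p l * (p l * C5 j j' l + 2 * p j * C4 j j' l) := by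
  simp only [filter_ne', filter_ne_and_ne]
  conv_lhs => simp only [mul_sum, ← mul_assoc]
  rw [variance_sum_sum_sum_mul _ _ _ _ hmem, sum_sum_eq_sum_diag_add_sum_sum_erase]
  congr 1
  · refine sum_congr rfl fun j _ => ?_
    have hcount : (n : ℝ) * (p j - 1 / n) = ns j - 1 := by
      have : (n : ℝ) ≠ 0 := Nat.cast_ne_zero.mpr (by have := hlt j; omega)
      rw [hp]
      field_simp
    rw [sum_sum_mul_covariance_within_source (q := p) (K := od j ^ 2 / (n * p j))
      (fun l l' => by simpa only [hcard, hod, hp] using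
        weight_mul_weight_eq_odds_sq_div (hpos j) (hlt j) _ _)
      (fun i l => (hmem i l).aemeasurable) (hV j) (hC2 j) (hC3 j)
      (fun l l' hl hl' hll' => hzero j j l l' hl hl' hll' hl' hl), hcard, hcount]
  · have hpair := fun j j' (hjj' : j ≠ j') =>
      sum_sum_mul_covariance_across_sources
        (disjoint_left.mpr fun i hi hi' => hjj' ((hpart i).unique hi hi')) hjj'
        (q := p) (K := od j * od j')
        (fun l l' => by simpa only [hcard, hod, hp] using
          weight_mul_weight_eq_odds_mul_odds (hlt j) (hlt j') _ _)
        (hC5 j j' · hjj') (hC4 j j' · hjj') (hC4 j' j · hjj'.symm) (hzero' j j' hjj') (hzero j j')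
    -- the `C₄'` part of the pair `(j, j')` is the `C₄` part of `(j', j)`
    rw [sum_congr rfl fun j _ => sum_congr rfl fun j' hj' => hpair j j' (ne_of_mem_erase hj').symm,
      sum_sum_erase_add_swap]
    refine sum_congr rfl fun j _ => sum_congr rfl fun j' _ => ?_
    rw [erase_right_comm (a := j') (b := j), mul_sum, mul_sum, mul_sum, ← sum_add_distrib]
    refine sum_congr rfl fun l _ => ?_
    ring
end
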